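/- arXiv:2003.14218 — 2 statements merged into one kernel-verified Lean document; each statement's English description precedes it below -/
import Mathlib

section
/- Let O be a finite order ideal in the terms of n variables, ∂O its border and P_O the Pommaret basis of the monomial ideal generated by the terms outside O. Let K be a field and A a commutative Noetherian K-algebra. For every ideal I of R_A = A[x_1,…,x_n], I is generated by a ∂O-marked basis if and only if I is generated by a P_O-marked basis. -/
open MvPolynomial

/-- A term in `n` variables, viewed as its exponent vector in `ℕ^n`. -/
abbrev Term (n : ℕ) := Fin n →₀ ℕ

/-- The total degree of a term. -/
def termDeg {n : ℕ} (τ : Term n) : ℕ := τ.sum fun _ e => e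

/-- `O` is an order ideal: every divisor (componentwise `≤`) of a term of `O` lies in `O`. -/
def IsOrderIdeal {n : ℕ} (O : Set (Term n)) : Prop :=
  ∀ σ τ : Term n, τ ∈ O → σ ≤ τ → σ ∈ O

/-- The border `∂O` of an order ideal `O`. -/
def border {n : ℕ} (O : Set (Term n)) : Set (Term n) :=
  {μ | μ ∉ O ∧ ∃ τ ∈ O, ∃ i : Fin n, μ = τ + Finsupp.single i 1}

/-- The Pommaret basis `P_O = {σ ∉ O : σ / min σ ∈ O}` of the monomial ideal generated by the
terms outside `O`; here `i` is the minimal variable of `σ`. -/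
def pommaret {n : ℕ} (O : Set (Term n)) : Set (Term n) :=
  {σ | σ ∉ O ∧ ∃ i : Fin n, σ i ≠ 0 ∧ (∀ j : Fin n, j < i → σ j = 0) ∧
    σ - Finsupp.single i 1 ∈ O}

/-- `F` is an `H`-marked set (with tails in `O`): for every `α ∈ H`,
`F α = α - Σ_{σ ∈ O} c_σ σ`, i.e. the coefficient of `α` is `1` and all other
terms in the support of `F α` lie in `O`. -/
def IsMarkedSet {n : ℕ} (A : Type*) [CommRing A] (O H : Set (Term n))
    (F : Term n → MvPolynomial (Fin n) A) : Prop :=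
  ∀ α ∈ H, (F α).coeff α = 1 ∧ ∀ γ ∈ (F α).support, γ ≠ α → γ ∈ O

/-- The `A`-submodule `⟨O⟩_A` of `R_A` spanned by the monomials with exponent in `O`. -/
noncomputable def OSpan {n : ℕ} (A : Type*) [CommRing A] (O : Set (Term n)) :
    Submodule A (MvPolynomial (Fin n) A) :=
  Submodule.span A ((fun σ : Term n => (monomial σ (1 : A) : MvPolynomial (Fin n) A)) '' O)

/-- `R_A = (S) ⊕ ⟨O⟩_A` as an internal direct sum of `A`-modules. -/
def IsBasisDecomp {n : ℕ} (A : Type*) [CommRing A] (O : Set (Term n))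
    (S : Set (MvPolynomial (Fin n) A)) : Prop :=
  (Submodule.restrictScalars A (Ideal.span S) ⊓ OSpan A O = ⊥) ∧
  (Submodule.restrictScalars A (Ideal.span S) ⊔ OSpan A O = ⊤)

/-- `F` is an `H`-marked basis. -/
def IsMarkedBasis {n : ℕ} (A : Type*) [CommRing A] (O H : Set (Term n))
    (F : Term n → MvPolynomial (Fin n) A) : Prop :=
  IsMarkedSet A O H F ∧ IsBasisDecomp A O (F '' H)

/-- The iterated borders: `∂^0 O = O` and `∂^{k+1} O = ∂(∂^0 O ∪ ⋯ ∪ ∂^k O)`. -/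
def borderIter {n : ℕ} (O : Set (Term n)) : ℕ → Set (Term n)
  | 0 => O
  | k + 1 => border (⋃ j : Fin (k + 1), borderIter O j.1)
decreasing_by exact j.2

/-- The index `ind_O(μ)`: the least `k` with `μ ∈ ∂^k O`. -/
noncomputable def indO {n : ℕ} (O : Set (Term n)) (μ : Term n) : ℕ :=
  sInf {k | μ ∈ borderIter O k}

/-- The multiplicative set of `β i` for the degree-ordered border reduction structure:
`M_{β_i} = {η : β_j ∤ η β_i for every j > i}`. -/
def multSet {n m : ℕ} (β : Fin m → Term n) (i : Fin m) : Set (Term n) :=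
  {η | ∀ j : Fin m, i < j → ¬ β j ≤ η + β i}

/-- The cone of `β i` by its multiplicative set. -/
def cone {n m : ℕ} (β : Fin m → Term n) (i : Fin m) : Set (Term n) :=
  {γ | ∃ η ∈ multSet β i, γ = η + β i}

/-- One step of border reduction: some `γ = η β_i ∈ supp g` with `η ∈ M_{β_i}` is replaced
using the marked polynomial `B i`. -/
def BStep {n m : ℕ} {A : Type*} [CommRing A] (β : Fin m → Term n)
    (B : Fin m → MvPolynomial (Fin n) A) (g h : MvPolynomial (Fin n) A) : Prop :=
  ∃ (i : Fin m) (η : Term n), η ∈ multSet β i ∧ η + β i ∈ g.support ∧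
    h = g - monomial η (g.coeff (η + β i)) * B i

/-- The S-polynomial of two marked polynomials with head terms `α`, `α'`. -/
noncomputable def Spoly {n : ℕ} {A : Type*} [CommRing A] (α α' : Term n)
    (f f' : MvPolynomial (Fin n) A) : MvPolynomial (Fin n) A :=
  monomial (α ⊔ α' - α) 1 * f - monomial (α ⊔ α' - α') 1 * f'

/-- `(α, α')` is a neighbour couple of distinct terms. -/
def Neighbour {n : ℕ} (α α' : Term n) : Prop :=
  α ≠ α' ∧ ((∃ j : Fin n, α = α' + Finsupp.single j 1) ∨
    (∃ i j : Fin n, α + Finsupp.single i 1 = α' + Finsupp.single j 1))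

/-- `(β i, β j)` is a non-multiplicative couple for the border reduction structure. -/
def NonMultB {n m : ℕ} (β : Fin m → Term n) (i j : Fin m) : Prop :=
  ∃ (ℓ : Fin n) (δ : Term n), Finsupp.single ℓ 1 ∉ multSet β i ∧ δ ∈ multSet β j ∧
    Finsupp.single ℓ 1 + β i = δ + β j

/-- The Pommaret multiplicative set of a term `α`: terms in the variables `x_1, …, min α`. -/
def pommMult {n : ℕ} (α : Term n) : Set (Term n) :=
  {η | ∀ j : Fin n, η j ≠ 0 → ∀ k : Fin n, k < j → α k = 0}

/-- One step of Pommaret reduction. -/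
def PStep {n : ℕ} {A : Type*} [CommRing A] (O : Set (Term n))
    (P : Term n → MvPolynomial (Fin n) A) (g h : MvPolynomial (Fin n) A) : Prop :=
  ∃ α ∈ pommaret O, ∃ η ∈ pommMult α, η + α ∈ g.support ∧
    h = g - monomial η (g.coeff (η + α)) * P α

/-- `(α, α')` is a non-multiplicative couple for the Pommaret reduction structure. -/
def NonMultP {n : ℕ} (α α' : Term n) : Prop :=
  ∃ ℓ : Fin n, Finsupp.single ℓ 1 ∉ pommMult α ∧
    ∃ δ ∈ pommMult α', Finsupp.single ℓ 1 + α = δ + α'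



/-!
Both conditions say that `R_A = I ⊕ ⟨O⟩_A`. Given this decomposition, `f_α := x^α - NF(x^α)`
is an `H`-marked set in `I` for any `P_O ⊆ H ⊆ ∂O`, and it suffices to see that the
`P_O`-marked polynomials alone generate an ideal `J` with `J + ⟨O⟩_A = R_A`: then `J ⊆ I` and
`I ∩ ⟨O⟩_A = 0` force `J = I` by modularity. For `γ = η + σ ∉ O` with `σ ∈ O`, stripping
minimal variables off `γ` until the result falls into `O` writes `γ = η₁ + α` with `α ∈ P_O`,
and `η₁` is smaller than `η` in the colex order (`x_n` most significant). Hence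
`x^γ = x^{η₁} f_α + x^{η₁} (x^α - f_α)`, whose second summand lies in `J + ⟨O⟩_A` by
well-founded induction on `η`.
-/

open Finsupp

section Terms

variable {n : ℕ}

theorem exists_minVar_of_ne_zero {γ : Term n} (hγ : γ ≠ 0) :
    ∃ m, γ m ≠ 0 ∧ ∀ j < m, γ j = 0 := by
  have hne : γ.support.Nonempty := support_nonempty_iff.mpr hγ
  refine ⟨γ.support.min' hne, mem_support_iff.mp (γ.support.min'_mem hne), fun j hj => ?_⟩
  by_contra hγj
  exact (γ.support.min'_le j (mem_support_iff.mpr hγj)).not_gt hj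

theorem toColex_add_single_lt {a b : Term n} {m : Fin n} (h : toColex a < toColex b)
    (hb : ∀ k, b k ≠ 0 → m < k) : toColex (a + single m 1) < toColex b := by
  obtain ⟨j, hj, hlt⟩ := Colex.lt_iff.mp h
  have hmj : m < j := hb j (by simp at hlt; omega)
  refine Colex.lt_iff.mpr ⟨j, fun d hd => ?_, ?_⟩
  · simpa [single_apply, (hmj.trans hd).ne] using hj d hd
  · simpa [single_apply, hmj.ne] using hlt

theorem pommaret_subset_border (O : Set (Term n)) : pommaret O ⊆ border O := by
  rintro σ ⟨hσ, i, hi, -, hsub⟩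
  exact ⟨hσ, σ - single i 1, hsub, i,
    (tsub_add_cancel_of_le (single_le_iff.mpr (Nat.one_le_iff_ne_zero.mpr hi))).symm⟩

variable {O : Set (Term n)}

theorem toColex_add_single_lt_cofactor {γ η₁ : Term n} {m : Fin n} (hO : IsOrderIdeal O)
    (hγm : γ m ≠ 0) (hmin : ∀ j < m, γ j = 0)
    (hη₁ : ∀ η, ∀ σ ∈ O, γ - single m 1 = η + σ → toColex η₁ < toColex η) :
    ∀ η, ∀ σ ∈ O, γ = η + σ → toColex (η₁ + single m 1) < toColex η := by
  rintro η σ hσ rfl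
  by_cases hηm : η m = 0
  · have hσm : single m 1 ≤ σ := single_le_iff.mpr (by simp at hγm; omega)
    have h := hη₁ η _ (hO _ σ hσ tsub_le_self) (add_tsub_assoc_of_le hσm η)
    refine toColex_add_single_lt h fun k hk => ?_
    have hmk : m ≤ k := not_lt.mp fun hkm => by simpa [hk] using hmin k hkm
    exact hmk.lt_of_ne fun h => hk (h ▸ hηm)
  · have hηm : single m 1 ≤ η := single_le_iff.mpr (Nat.one_le_iff_ne_zero.mpr hηm)
    have h := hη₁ _ σ hσ (tsub_add_eq_add_tsub hηm).symm
    have h' := add_lt_add_left h (toColex (single m 1))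
    simpa only [← toColex_add, tsub_add_cancel_of_le hηm] using h'

theorem exists_pommaret_decomposition (hO : IsOrderIdeal O) (h0 : (0 : Term n) ∈ O)
    (γ : Term n) (hγ : γ ∉ O) :
    ∃ η₁, ∃ α ∈ pommaret O, γ = η₁ + α ∧
      ∀ η, ∀ σ ∈ O, γ = η + σ → toColex η₁ < toColex η := by
  induction γ using WellFoundedLT.induction with
  | _ γ ih =>
  obtain ⟨m, hγm, hmin⟩ := exists_minVar_of_ne_zero (fun h : γ = 0 => hγ (h ▸ h0))
  by_cases hγ' : γ - single m 1 ∈ O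
  · refine ⟨0, γ, ⟨hγ, m, hγm, hmin, hγ'⟩, (zero_add γ).symm, ?_⟩
    rintro η σ hσ rfl
    exact bot_lt_iff_ne_bot.mpr fun h : toColex η = 0 =>
      hγ (by simpa [show η = 0 from h] using hσ)
  · have hlt : γ - single m 1 < γ :=
      tsub_le_self.lt_of_ne fun h => by
        have := congr($h m)
        simp at this
        omega
    obtain ⟨η₁, α, hα, hγα, hη₁⟩ := ih _ hlt hγ'
    refine ⟨η₁ + single m 1, α, hα, ?_, toColex_add_single_lt_cofactor hO hγm hmin hη₁⟩
    have hmγ : single m 1 ≤ γ := single_le_iff.mpr (Nat.one_le_iff_ne_zero.mpr hγm)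
    rw [add_right_comm, ← hγα, tsub_add_cancel_of_le hmγ]

end Terms

section Polynomials

variable {n : ℕ} {A : Type*} [CommRing A] {O : Set (Term n)}

theorem OSpan_eq_restrictSupport : OSpan A O = restrictSupport A O :=
  (restrictSupport_eq_span (R := A) O).symm

theorem mem_OSpan_iff {p : MvPolynomial (Fin n) A} : p ∈ OSpan A O ↔ ↑p.support ⊆ O := by
  rw [OSpan_eq_restrictSupport, mem_restrictSupport_iff]

theorem isBasisDecomp_iff_isCompl {S : Set (MvPolynomial (Fin n) A)} :
    IsBasisDecomp A O S ↔ IsCompl ((Ideal.span S).restrictScalars A) (OSpan A O) := by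
  rw [isCompl_iff, _root_.disjoint_iff, codisjoint_iff]
  rfl

theorem isMarkedSet_of_sub_mem_OSpan {H : Set (Term n)} {F : Term n → MvPolynomial (Fin n) A}
    (hHO : ∀ α ∈ H, α ∉ O) (hF : ∀ α ∈ H, monomial α 1 - F α ∈ OSpan A O) :
    IsMarkedSet A O H F := by
  intro α hα
  have htail := mem_OSpan_iff.mp (hF α hα)
  have hcoeff : ∀ γ,
      (F α).coeff γ = (monomial α (1 : A)).coeff γ - (monomial α 1 - F α).coeff γ := by
    simp
  refine ⟨?_, fun γ hγ hγα => htail ?_⟩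
  · have hα0 : (monomial α 1 - F α).coeff α = 0 :=
      MvPolynomial.notMem_support_iff.mp fun h => hHO α hα (htail h)
    rw [hcoeff, hα0, coeff_monomial, if_pos rfl, sub_zero]
  · rw [MvPolynomial.mem_support_iff] at hγ
    rw [Finset.mem_coe, MvPolynomial.mem_support_iff]
    rwa [hcoeff, coeff_monomial, if_neg (Ne.symm hγα), zero_sub, neg_ne_zero] at hγ

theorem codisjoint_OSpan_of_pommaret (hO : IsOrderIdeal O) (h0 : (0 : Term n) ∈ O)
    {F : Term n → MvPolynomial (Fin n) A} {J : Ideal (MvPolynomial (Fin n) A)}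
    (hFJ : ∀ α ∈ pommaret O, F α ∈ J)
    (hF : ∀ α ∈ pommaret O, monomial α 1 - F α ∈ OSpan A O) :
    Codisjoint (J.restrictScalars A) (OSpan A O) := by
  set M := J.restrictScalars A ⊔ OSpan A O
  have key : ∀ η : Colex (Term n), ∀ σ ∈ O, monomial (ofColex η + σ) (1 : A) ∈ M := by
    intro η
    induction η using WellFoundedLT.induction with
    | _ η ih =>
    intro σ hσ
    by_cases hησ : ofColex η + σ ∈ O
    · exact Submodule.mem_sup_right (Submodule.subset_span ⟨_, hησ, rfl⟩)
    obtain ⟨η₁, α, hα, hγ, hlt⟩ := exists_pommaret_decomposition hO h0 _ hησ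
    have htail : OSpan A O ≤ M.comap (LinearMap.mulLeft A (monomial η₁ 1)) :=
      Submodule.span_le.mpr <| by
        rintro _ ⟨σ', hσ', rfl⟩
        simpa using ih (toColex η₁) (hlt _ σ hσ rfl) σ' hσ'
    have hsplit : monomial (ofColex η + σ) (1 : A)
        = monomial η₁ 1 * F α + monomial η₁ 1 * (monomial α 1 - F α) := by
      rw [hγ, ← mul_add, add_sub_cancel, monomial_mul, one_mul]
    rw [hsplit]
    exact M.add_mem (Submodule.mem_sup_left (J.mul_mem_left _ (hFJ α hα))) (htail (hF α hα))
  rw [codisjoint_iff, eq_top_iff, ← restrictSupport_univ, restrictSupport_eq_span,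
    Submodule.span_le]
  rintro _ ⟨γ, -, rfl⟩
  simpa using key (toColex γ) 0 h0

theorem exists_sub_mem_OSpan_of_codisjoint {I : Ideal (MvPolynomial (Fin n) A)}
    (hI : Codisjoint (I.restrictScalars A) (OSpan A O)) (τ : Term n) :
    ∃ f ∈ I, monomial τ 1 - f ∈ OSpan A O := by
  have hτ : monomial τ 1 ∈ I.restrictScalars A ⊔ OSpan A O := hI.eq_top ▸ Submodule.mem_top
  obtain ⟨f, hf, g, hg, hfg⟩ := Submodule.mem_sup.mp hτ
  exact ⟨f, hf, by rwa [← hfg, add_sub_cancel_left]⟩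

theorem exists_markedBasis_iff_isCompl (hO : IsOrderIdeal O) (h0 : (0 : Term n) ∈ O)
    {H : Set (Term n)} (hPH : pommaret O ⊆ H) (hHO : ∀ α ∈ H, α ∉ O)
    (I : Ideal (MvPolynomial (Fin n) A)) :
    (∃ F : Term n → MvPolynomial (Fin n) A,
        IsMarkedBasis A O H F ∧ I = Ideal.span (F '' H)) ↔
      IsCompl (I.restrictScalars A) (OSpan A O) := by
  constructor
  · rintro ⟨F, ⟨-, hF⟩, rfl⟩
    exact isBasisDecomp_iff_isCompl.mp hF
  · intro hI
    choose F hFI hF using exists_sub_mem_OSpan_of_codisjoint hI.codisjoint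
    have hle : Ideal.span (F '' H) ≤ I :=
      Ideal.span_le.mpr (by rintro _ ⟨α, -, rfl⟩; exact hFI α)
    have hcod : Codisjoint ((Ideal.span (F '' H)).restrictScalars A) (OSpan A O) :=
      codisjoint_OSpan_of_pommaret hO h0 (fun α hα => Ideal.subset_span ⟨α, hPH hα, rfl⟩)
        (fun α _ => hF α)
    have heq : Ideal.span (F '' H) = I := Submodule.restrictScalars_injective A _ _ <|
      eq_of_le_of_inf_le_of_sup_le (z := OSpan A O) (Submodule.restrictScalars_mono A hle)
        (hI.inf_eq_bot ▸ bot_le) (hcod.eq_top ▸ le_top)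
    refine ⟨F, ⟨isMarkedSet_of_sub_mem_OSpan hHO fun α _ => hF α, ?_⟩, heq.symm⟩
    rwa [isBasisDecomp_iff_isCompl, heq]

end Polynomials

theorem generated_by_border_basis_iff_pommaret_basis_general {n : ℕ} (A : Type*) [CommRing A]
    (O : Set (Term n)) (hO : IsOrderIdeal O)
    (I : Ideal (MvPolynomial (Fin n) A)) :
    (∃ B : Term n → MvPolynomial (Fin n) A,
        IsMarkedBasis A O (border O) B ∧ I = Ideal.span (B '' border O)) ↔
    (∃ P : Term n → MvPolynomial (Fin n) A,
        IsMarkedBasis A O (pommaret O) P ∧ I = Ideal.span (P '' pommaret O)) := by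
  rcases O.eq_empty_or_nonempty with rfl | ⟨τ, hτ⟩
  · have hempty : border (∅ : Set (Term n)) = pommaret ∅ := by ext; simp [border, pommaret]
    rw [hempty]
  have h0 : (0 : Term n) ∈ O := hO 0 τ hτ zero_le
  rw [exists_markedBasis_iff_isCompl hO h0 (pommaret_subset_border O) (fun _ h => h.1),
    exists_markedBasis_iff_isCompl hO h0 subset_rfl (fun _ h => h.1)]

/-- for a finite order ideal `O`, an ideal `I ⊆ R_A` is generated by a
`∂O`-marked basis iff it is generated by a `P_O`-marked basis. -/
theorem generated_by_border_basis_iff_pommaret_basis {n : ℕ} (K : Type*) [Field K] (A : Type*) [CommRing A] [Algebra K A]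
    [IsNoetherianRing A]
    (O : Set (Term n)) (hO : IsOrderIdeal O) (hOfin : O.Finite)
    (I : Ideal (MvPolynomial (Fin n) A)) :
    (∃ B : Term n → MvPolynomial (Fin n) A,
        IsMarkedBasis A O (border O) B ∧ I = Ideal.span (B '' border O)) ↔
    (∃ P : Term n → MvPolynomial (Fin n) A,
        IsMarkedBasis A O (pommaret O) P ∧ I = Ideal.span (P '' pommaret O)) :=
  generated_by_border_basis_iff_pommaret_basis_general A O hO I
end

section
/- Let O be a finite order ideal in the terms of n variables. If δ ∈ O and η are terms such that δ·η ∉ O and β ∈ ∂O divides δ·η and has maximal degree among the elements of ∂O dividing δ·η, then deg(η) > deg(δ·η/β). -/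
open MvPolynomial

/-! A maximal term `ρ` of `O` between `δ` and `δη` has a multiple `x_i ρ` dividing `δη`; it lies
in `∂O` and has degree `> deg δ`. Hence the maximal border divisor `β` has `deg β > deg δ`, and
`deg (δη/β) = deg δ + deg η - deg β < deg η`. -/

lemma termDeg_eq_degree {n : ℕ} (τ : Term n) : termDeg τ = τ.degree := rfl

lemma Finsupp.degree_strictMono {σ : Type*} : StrictMono (degree : (σ →₀ ℕ) → ℕ) := by
  intro a b hab
  have hpos : (b - a).degree ≠ 0 := by
    rw [Ne, degree_eq_zero_iff, tsub_eq_zero_iff_le]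
    exact hab.not_ge
  rw [← add_tsub_cancel_of_le hab.le, map_add]
  omega

lemma Finsupp.exists_add_single_le_of_lt {σ : Type*} {a b : σ →₀ ℕ} (hab : a < b) :
    ∃ i, a + single i 1 ≤ b := by
  obtain ⟨hle, i, hi⟩ := Finsupp.lt_def.1 hab
  refine ⟨i, fun j => ?_⟩
  rcases eq_or_ne i j with rfl | hij
  · simpa using hi
  · simpa [hij] using hle j

lemma exists_mem_border_between {n : ℕ} {O : Set (Term n)} {σ τ : Term n}
    (hσ : σ ∈ O) (hτ : τ ∉ O) (hστ : σ ≤ τ) : ∃ μ ∈ border O, σ < μ ∧ μ ≤ τ := by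
  let S := {ρ | ρ ∈ O ∧ σ ≤ ρ ∧ ρ ≤ τ}
  have hS : S.Finite := (Set.finite_Icc σ τ).subset fun ρ hρ => ⟨hρ.2.1, hρ.2.2⟩
  obtain ⟨ρ, ⟨hρO, hσρ, hρτ⟩, hρmax⟩ := hS.exists_maximal ⟨σ, hσ, le_rfl, hστ⟩
  have hρlt : ρ < τ := hρτ.lt_of_ne fun h => hτ (h ▸ hρO)
  obtain ⟨i, hiτ⟩ := Finsupp.exists_add_single_le_of_lt hρlt
  have hρμ : ρ < ρ + Finsupp.single i 1 :=
    lt_add_of_pos_right ρ (pos_iff_ne_zero.2 (Finsupp.single_ne_zero.2 one_ne_zero))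
  have hμO : ρ + Finsupp.single i 1 ∉ O := fun hμ =>
    hρμ.not_ge (hρmax ⟨hμ, hσρ.trans hρμ.le, hiτ⟩ hρμ.le)
  exact ⟨_, ⟨hμO, ρ, hρO, i, rfl⟩, hσρ.trans_lt hρμ, hiτ⟩

theorem deg_lt_of_maximal_border_divisor_general {n : ℕ}
    (O : Set (Term n))
    (δ η β : Term n) (hδ : δ ∈ O) (hδη : δ + η ∉ O)
    (hdvd : β ≤ δ + η)
    (hmax : ∀ β' ∈ border O, β' ≤ δ + η → termDeg β' ≤ termDeg β) :
    termDeg (δ + η - β) < termDeg η := by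
  obtain ⟨μ, hμ, hδμ, hμδη⟩ := exists_mem_border_between hδ hδη le_self_add
  have hδβ : termDeg δ < termDeg β :=
    (Finsupp.degree_strictMono hδμ).trans_le (hmax μ hμ hμδη)
  have hsplit : termDeg (δ + η - β) + termDeg β = termDeg δ + termDeg η := by
    simp only [termDeg_eq_degree]
    rw [← map_add, tsub_add_cancel_of_le hdvd, map_add]
  omega

/-- Lemma `lem:IndB` (2): if `δ ∈ O`, `δη ∉ O` and `β ∈ ∂O` is a divisor
of `δη` of maximal degree among the border divisors of `δη`, then `deg η > deg(δη/β)`. -/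
theorem deg_lt_of_maximal_border_divisor {n : ℕ}
    (O : Set (Term n)) (hO : IsOrderIdeal O) (hOfin : O.Finite)
    (δ η β : Term n) (hδ : δ ∈ O) (hδη : δ + η ∉ O)
    (hβ : β ∈ border O) (hdvd : β ≤ δ + η)
    (hmax : ∀ β' ∈ border O, β' ≤ δ + η → termDeg β' ≤ termDeg β) :
    termDeg (δ + η - β) < termDeg η :=
  deg_lt_of_maximal_border_divisor_general O δ η β hδ hδη hdvd hmax
end
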